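/- arXiv:2001.07528 — 2 statements merged into one kernel-verified Lean document; each statement's English description precedes it below -/
import Mathlib

section
/- (Harada–Sai Lemma, length version) Let $R$ be a ring and let $M_1, \dots, M_{2^n}$ be indecomposable $R$-modules each of finite length at most $n$. Suppose given $R$-linear maps $f_i : M_i \to M_{i+1}$ for $1 \le i \le 2^n - 1$, none of which is an isomorphism. Then the composite $f_{2^n-1} \circ \cdots \circ f_1 = 0$. -/
/-!
Lengths can only drop along linear maps. Split a chain of `2 ^ (k + 1) - 1` maps as `e ∘ φ ∘ h`,
where `h` and `e` are chains of `2 ^ k - 1` maps whose images have length at most `m + 1` by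
induction. If the image of the composite still had length `m + 1`, then `p := φ (range h)` would be
mapped by `e` injectively onto `range e`, so it would be a complement of `ker e`; as the target of
`φ` is indecomposable, `p` is everything, and the same argument one step back shows that `φ` is
an isomorphism. Thus each doubling of the chain lowers the length of the image by one.
-/

open LinearMap Submodule Function

variable {R : Type*} [Ring R]

/-- A module is indecomposable if it is nonzero and is not the direct sum of
two nonzero submodules. -/
def IsIndecomposableModule (R M : Type*) [Ring R] [AddCommGroup M] [Module R M] : Prop :=
  Nontrivial M ∧ ∀ p q : Submodule R M, IsCompl p q → p = ⊥ ∨ q = ⊥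

/-- The (Jordan–Hölder) length of a module: the length of a maximal chain of
submodules, i.e. the Krull dimension of its submodule lattice. -/
noncomputable def moduleLength (R M : Type*) [Ring R] [AddCommGroup M] [Module R M] :
    WithBot ℕ∞ :=
  Order.krullDim (Submodule R M)

/-- The composite `M 0 → M j` of the first `j` maps of a chain of linear maps. -/
def chainComp {M : ℕ → Type*} [∀ i, AddCommGroup (M i)] [∀ i, Module R (M i)]
    (f : ∀ i, M i →ₗ[R] M (i + 1)) : ∀ j, M 0 →ₗ[R] M j
  | 0 => LinearMap.id
  | (j + 1) => f j ∘ₗ chainComp f j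

open Module

section Length

variable {A B : Type*} [AddCommGroup A] [Module R A] [AddCommGroup B] [Module R B]

theorem LinearMap.length_ker_add_length_range (φ : A →ₗ[R] B) :
    length R (ker φ) + length R (range φ) = length R A :=
  (length_eq_add_of_exact (ker φ).subtype φ.rangeRestrict (ker φ).injective_subtype
    φ.surjective_rangeRestrict
    (exact_iff.mpr (by rw [ker_rangeRestrict, Submodule.range_subtype]))).symm

theorem Submodule.length_map_le (φ : A →ₗ[R] B) (p : Submodule R A) :
    length R (p.map φ) ≤ length R p :=
  length_le_of_surjective (φ.submoduleMap p) (φ.submoduleMap_surjective p)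

theorem Submodule.disjoint_ker_of_length_map_eq {φ : A →ₗ[R] B} {p : Submodule R A}
    (hp : length R p ≠ ⊤) (h : length R (p.map φ) = length R p) : Disjoint p (ker φ) := by
  have hsum := (φ.domRestrict p).length_ker_add_length_range
  rw [range_domRestrict, h] at hsum
  rw [← injective_domRestrict_iff, ← ker_eq_bot, ← Submodule.subsingleton_iff_eq_bot,
    ← length_eq_zero_iff (R := R)]
  exact WithTop.add_right_cancel hp (hsum.trans (zero_add _).symm)

theorem Submodule.eq_of_le_of_length_le {p q : Submodule R A} (hpq : p ≤ q)
    (h : length R q ≤ length R p) (hp : length R p ≠ ⊤) : p = q := by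
  by_contra hne
  have hlt := Order.height_strictMono (lt_of_le_of_ne hpq hne)
  simp only [← length_submodule] at hlt
  exact (hlt (lt_top_iff_ne_top.mpr hp)).not_ge h

theorem Submodule.isCompl_ker_of_length_map_eq {φ : A →ₗ[R] B} {p : Submodule R A}
    (hp : length R p ≠ ⊤) (h : length R (p.map φ) = length R p)
    (hrange : length R (range φ) ≤ length R p) : IsCompl p (ker φ) := by
  refine ⟨disjoint_ker_of_length_map_eq hp h, map_eq_range_iff.mp ?_⟩
  exact eq_of_le_of_length_le map_le_range (h ▸ hrange) (h ▸ hp)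

end Length

theorem IsIndecomposableModule.eq_bot_of_isCompl {A : Type*} [AddCommGroup A] [Module R A]
    (hA : IsIndecomposableModule R A) {p q : Submodule R A} (hpq : IsCompl p q) (hp : p ≠ ⊥) :
    q = ⊥ :=
  (hA.2 p q hpq).resolve_left hp

theorem length_range_comp_comp_le {X B C Y : Type*} [AddCommGroup X] [Module R X]
    [AddCommGroup B] [Module R B] [AddCommGroup C] [Module R C] [AddCommGroup Y] [Module R Y]
    {h : X →ₗ[R] B} {φ : B →ₗ[R] C} {e : C →ₗ[R] Y} {m : ℕ}
    (hB : IsIndecomposableModule R B) (hC : IsIndecomposableModule R C) (hφ : ¬ Bijective φ)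
    (hh : length R (range h) ≤ (m + 1 : ℕ)) (he : length R (range e) ≤ (m + 1 : ℕ)) :
    length R (range (e ∘ₗ φ ∘ₗ h)) ≤ m := by
  by_contra hlt
  set q := range h
  set p := q.map φ
  rw [range_comp, range_comp] at hlt
  have hle : ((m + 1 : ℕ) : ℕ∞) ≤ length R (p.map e) :=
    ENat.natCast_add_one_le_iff.mpr (not_le.mp hlt)
  have hmap_e := Submodule.length_map_le e p
  have hmap_φ := Submodule.length_map_le φ q
  have hfin : ((m + 1 : ℕ) : ℕ∞) ≠ ⊤ := ENat.natCast_ne_top _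
  have hp_len : length R p = (m + 1 : ℕ) := le_antisymm (hmap_φ.trans hh) (hle.trans hmap_e)
  have hq_len : length R q = (m + 1 : ℕ) := le_antisymm hh (hp_len ▸ hmap_φ)
  have hp_ne : p ≠ ⊥ := by
    rw [Ne, ← Submodule.subsingleton_iff_eq_bot, ← length_eq_zero_iff (R := R), hp_len]
    exact Nat.cast_ne_zero.mpr m.succ_ne_zero
  have hq_ne : q ≠ ⊥ := fun hq => hp_ne (by simp only [p, hq, Submodule.map_bot])
  have hCcompl : IsCompl p (ker e) := Submodule.isCompl_ker_of_length_map_eq (hp_len ▸ hfin)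
    (le_antisymm hmap_e (hp_len ▸ hle)) (hp_len ▸ he)
  have hp_top : p = ⊤ := eq_top_of_isCompl_bot (hC.eq_bot_of_isCompl hCcompl hp_ne ▸ hCcompl)
  have hφ_range : range φ = ⊤ := top_le_iff.mp (hp_top ▸ map_le_range)
  have hBcompl : IsCompl q (ker φ) := Submodule.isCompl_ker_of_length_map_eq (hq_len ▸ hfin)
    (hp_len.trans hq_len.symm) (by rw [hφ_range, ← hp_top, hp_len, hq_len])
  exact hφ ⟨ker_eq_bot.mp (hB.eq_bot_of_isCompl hBcompl hq_ne), range_eq_top.mp hφ_range⟩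

section Chain

variable {M : ℕ → Type*} [∀ i, AddCommGroup (M i)] [∀ i, Module R (M i)]

theorem chainComp_add (f : ∀ i, M i →ₗ[R] M (i + 1)) (j : ℕ) :
    ∀ m, chainComp f (j + m) = chainComp (M := fun i => M (j + i)) (fun i => f (j + i)) m ∘ₗ
      chainComp f j
  | 0 => (LinearMap.id_comp _).symm
  | m + 1 => by
    change f (j + m) ∘ₗ chainComp f (j + m) = f (j + m) ∘ₗ _ ∘ₗ _
    rw [chainComp_add f j m]

theorem length_range_chainComp_le (k m : ℕ) (f : ∀ i, M i →ₗ[R] M (i + 1))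
    (hindec : ∀ i < 2 ^ k, IsIndecomposableModule R (M i))
    (hlen : ∀ i < 2 ^ k, length R (M i) ≤ (m + k : ℕ))
    (hnotiso : ∀ i < 2 ^ k - 1, ¬ Bijective (f i)) :
    length R (range (chainComp f (2 ^ k - 1))) ≤ m := by
  induction k generalizing m M with
  | zero =>
    change length R (range (LinearMap.id : M 0 →ₗ[R] M 0)) ≤ m
    rw [range_id, length_top]
    simpa using hlen 0 one_pos
  | succ k ih =>
    have hpow : 1 ≤ 2 ^ k := Nat.one_le_two_pow
    set t := 2 ^ k - 1
    have hsplit : 2 ^ (k + 1) - 1 = (t + 1) + t := by rw [pow_succ]; omega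
    rw [hsplit, chainComp_add f (t + 1) t]
    refine length_range_comp_comp_le (hindec t (by omega)) (hindec (t + 1) (by omega))
      (hnotiso t (by omega)) ?_ ?_
    · exact ih (m + 1) f (fun i hi => hindec i (by omega))
        (fun i hi => (hlen i (by omega)).trans (by norm_cast; omega))
        (fun i hi => hnotiso i (by omega))
    · exact ih (m + 1) (M := fun i => M (t + 1 + i)) (fun i => f (t + 1 + i))
        (fun i hi => hindec _ (by omega))
        (fun i hi => (hlen _ (by omega)).trans (by norm_cast; omega))
        (fun i hi => hnotiso _ (by omega))

end Chain

/-- **Harada–Sai lemma.** If `M 0, …, M (2^n - 1)` are indecomposable modules of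
length at most `n` and none of the maps `f i : M i → M (i+1)` (for
`i < 2^n - 1`) is an isomorphism, then the composite
`M 0 → M (2^n - 1)` of all `2^n - 1` maps is zero. -/
theorem harada_sai (n : ℕ) (M : ℕ → Type*) [∀ i, AddCommGroup (M i)]
    [∀ i, Module R (M i)] (f : ∀ i, M i →ₗ[R] M (i + 1))
    (hindec : ∀ i < 2 ^ n, IsIndecomposableModule R (M i))
    (hlen : ∀ i < 2 ^ n, moduleLength R (M i) ≤ (n : ℕ∞))
    (hnotiso : ∀ i < 2 ^ n - 1, ¬ Bijective (f i)) :
    chainComp f (2 ^ n - 1) = 0 := by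
  have hlen' : ∀ i < 2 ^ n, length R (M i) ≤ (0 + n : ℕ) := fun i hi => by
    rw [zero_add, ← WithBot.coe_le_coe, coe_length]
    exact hlen i hi
  have h := length_range_chainComp_le n 0 f hindec hlen' hnotiso
  rw [← range_eq_bot, ← Submodule.subsingleton_iff_eq_bot, ← length_eq_zero_iff (R := R)]
  exact nonpos_iff_eq_zero.mp h
end

section
/- Let $A \xrightarrow{a} B \xrightarrow{b} C \xrightarrow{c} A$ be $R$-linear maps with $c b a = 0$, $a c b = 0$, and $b a c = 0$. Then the sequence $H^A_B \to H^A_C \to H^B_C$ is exact, where $H^A_B = \ker a / \operatorname{im}(cb)$, $H^A_C = \ker(ba)/\operatorname{im} c$, $H^B_C = \ker b/\operatorname{im}(ac)$, the first map is induced by $\mathrm{id}_A$ and the second by $a$. -/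
open LinearMap Submodule Function

variable {R : Type*} [Ring R]

/-- The homology `K ⧸ I` associated to submodules `K, I` of a module `X`. -/
noncomputable abbrev Hmod {X : Type*} [AddCommGroup X] [Module R X]
    (K I : Submodule R X) : Type _ :=
  K ⧸ (I.comap K.subtype)

/-- The map `K ⧸ I → K' ⧸ I'` induced by a linear map `φ` carrying `K` into `K'`
and `I` into `I'`. -/
noncomputable def Hmap {X Y : Type*} [AddCommGroup X] [Module R X]
    [AddCommGroup Y] [Module R Y] (K I : Submodule R X) (K' I' : Submodule R Y)
    (φ : X →ₗ[R] Y) (h1 : ∀ x ∈ K, φ x ∈ K') (h2 : ∀ x ∈ I, φ x ∈ I') :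
    Hmod K I →ₗ[R] Hmod K' I' :=
  Submodule.mapQ _ _ (φ.restrict h1) (fun x hx => by
    simpa [LinearMap.restrict_apply] using h2 x hx)

theorem Hmap_mk {X Y : Type*} [AddCommGroup X] [Module R X]
    [AddCommGroup Y] [Module R Y] (K I : Submodule R X) (K' I' : Submodule R Y)
    (φ : X →ₗ[R] Y) (h1 : ∀ x ∈ K, φ x ∈ K') (h2 : ∀ x ∈ I, φ x ∈ I')
    (x : K) :
    Hmap K I K' I' φ h1 h2 (Submodule.Quotient.mk x)
      = Submodule.Quotient.mk ⟨φ x, h1 x x.2⟩ := by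
  simp [Hmap, Submodule.mapQ_apply, LinearMap.restrict_apply]

/-- For `a : A → B`, `b : B → C`, `c : C → A` with `d³ = 0`, the sequence
`H^A_B → H^A_C → H^B_C` is exact, where `H^A_B = ker a / im (cb)`,
`H^A_C = ker (ba) / im c`, `H^B_C = ker b / im (ac)`, the first map is
induced by the identity of `A` and the second by `a`. -/
theorem cubic_zero_exact_at_AC {A B C : Type*}
    [AddCommGroup A] [Module R A] [AddCommGroup B] [Module R B]
    [AddCommGroup C] [Module R C]
    (a : A →ₗ[R] B) (b : B →ₗ[R] C) (c : C →ₗ[R] A)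
    (hcba : c ∘ₗ b ∘ₗ a = 0) (hacb : a ∘ₗ c ∘ₗ b = 0) (hbac : b ∘ₗ a ∘ₗ c = 0) :
    letI m1 : Hmod (ker a) (range (c ∘ₗ b)) →ₗ[R] Hmod (ker (b ∘ₗ a)) (range c) :=
      Hmap _ _ _ _ LinearMap.id
        (fun x hx => by
          simp only [mem_ker, LinearMap.comp_apply, LinearMap.id_apply] at *
          rw [hx, map_zero])
        (fun x hx => by rcases hx with ⟨y, rfl⟩; exact ⟨b y, rfl⟩)
    letI m2 : Hmod (ker (b ∘ₗ a)) (range c) →ₗ[R] Hmod (ker b) (range (a ∘ₗ c)) :=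
      Hmap _ _ _ _ a
        (fun x hx => by simpa [mem_ker] using hx)
        (fun x hx => by rcases hx with ⟨y, rfl⟩; exact ⟨y, rfl⟩)
    range m1 = ker m2 := by
  apply le_antisymm
  · rintro z ⟨w, rfl⟩
    obtain ⟨w, rfl⟩ := Submodule.Quotient.mk_surjective _ w
    · rw [mem_ker, Hmap_mk, Hmap_mk]
      have : a (LinearMap.id (R := R) w.1) = 0 := w.2
      rw [show (⟨a (LinearMap.id w.1), _⟩ : ker b) = 0 from Subtype.ext this]
      exact Submodule.Quotient.mk_eq_zero _ |>.2 (zero_mem _)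
  · intro z hz
    obtain ⟨⟨x, hx⟩, rfl⟩ := Submodule.Quotient.mk_surjective _ z
    · rw [mem_ker, Hmap_mk, Submodule.Quotient.mk_eq_zero] at hz
      obtain ⟨y, hy⟩ : a x ∈ range (a ∘ₗ c) := hz
      have hker : x - c y ∈ ker a := by
        simp only [mem_ker, map_sub]
        simp only [LinearMap.comp_apply] at hy
        rw [hy, sub_self]
      refine ⟨Submodule.Quotient.mk ⟨x - c y, hker⟩, ?_⟩
      rw [Hmap_mk, Submodule.Quotient.eq]
      refine show (_ : A) ∈ range c from ?_
      show LinearMap.id (x - c y) - x ∈ range c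
      simp only [LinearMap.id_apply]
      exact ⟨-y, by simp⟩
end
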